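/- For every constant α > 0 there exist constants c > 0 and C > 0 such that for all sufficiently large even n the following holds for the SEMO and the GSEMO maximizing COCZ: started from any population state in which the population consists entirely of Pareto-optimal individuals, has size at least α·n, and has distance to the Pareto borders at least √n, with probability at least 1 − C/n the algorithm performs at least c·n²·ln n objective-function evaluations before the objective values of the population cover the Pareto front of COCZ. -/

import Mathlib

/-!
Let `defect x = n - (cocz x).2` count the positions that keep `x` below the maximal second
objective; the front is covered only once the population contains an individual of defect `0`.
The proof tracks the potential `(Y + 1)⁻³` of the minimal defect `Y` of the population.
The population never loses the `≥ α n` Pareto-optimal objective values it starts with, so a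
given parent is selected with probability at most `1 / (α n)`, and to reach defect `m < Y` it must
flip `defect x - m` specific bits. As members have distinct defects, summing over parents and
levels shows that one iteration increases the expected potential by a factor at most
`1 + O(1 / (α n²))`. After `c n² ln n` iterations the expected potential is therefore at most
`n^{1/4} · n^{-3/2} ≤ 1 / n`, and Markov's inequality bounds the probability that the front
has been covered.
-/

open scoped ENNReal

namespace GSEMOPaper

attribute [local instance] Classical.propDecidable

/-- An individual (bit string) of length `n`. -/
abbrev Individual (n : ℕ) := Fin n → Bool

/-- `u` weakly dominates `v` (maximization, two objectives). -/
def weaklyDom (u v : ℝ × ℝ) : Prop := v.1 ≤ u.1 ∧ v.2 ≤ u.2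

/-- `u` strictly dominates `v`. -/
def strictlyDom (u v : ℝ × ℝ) : Prop := weaklyDom u v ∧ u ≠ v

/-- The Pareto front of a bi-objective function on bit strings. -/
def paretoFront {n : ℕ} (f : Individual n → ℝ × ℝ) : Set (ℝ × ℝ) :=
  {u | ∃ x : Individual n, f x = u ∧ ∀ y : Individual n, ¬ strictlyDom (f y) (f x)}

/-- The objective values of the population `P` cover the Pareto front of `f`. -/
def covers {n : ℕ} (f : Individual n → ℝ × ℝ) (P : Finset (Individual n)) : Prop :=
  paretoFront f ⊆ f '' (P : Set (Individual n))

/-- A valid (G)SEMO population: distinct members are mutually non-dominated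
(in particular they have pairwise distinct objective values). -/
def validPop {n : ℕ} (f : Individual n → ℝ × ℝ) (P : Finset (Individual n)) : Prop :=
  ∀ x ∈ P, ∀ y ∈ P, x ≠ y → ¬ weaklyDom (f x) (f y)

/-- Survival selection of the (G)SEMO: remove all individuals weakly dominated by the
offspring `y`, then insert `y` unless it is strictly dominated by a remaining individual. -/
noncomputable def updatePop {n : ℕ} (f : Individual n → ℝ × ℝ)
    (P : Finset (Individual n)) (y : Individual n) : Finset (Individual n) :=
  let Q := P.filter fun z => ¬ weaklyDom (f y) (f z)
  if ∃ z ∈ Q, strictlyDom (f z) (f y) then Q else insert y Q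

/-- Flip position `i` of `x`. -/
def flipOne {n : ℕ} (x : Individual n) (i : Fin n) : Individual n :=
  Function.update x i (!x i)

/-- One-bit mutation (SEMO): flip exactly one uniformly random position. -/
noncomputable def oneBitMut {n : ℕ} (x : Individual n) : PMF (Individual n) :=
  if h : n = 0 then PMF.pure x
  else
    haveI : Nonempty (Fin n) := ⟨⟨0, Nat.pos_of_ne_zero h⟩⟩
    (PMF.uniformOfFintype (Fin n)).map (flipOne x)

/-- A vector of `m` independent Bernoulli(`p`) bits. -/
noncomputable def bernoulliVec (p : ℝ≥0∞) (hp : p ≤ 1) : (m : ℕ) → PMF (Fin m → Bool)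
  | 0 => PMF.pure fun i => i.elim0
  | m + 1 => (PMF.ofFintype (fun b => cond b p (1 - p))
      (by rw [Fintype.sum_bool]; exact add_tsub_cancel_of_le hp)).bind fun b => (bernoulliVec p hp m).map fun v => Fin.cons b v

/-- Standard bit mutation (GSEMO): flip each position independently with probability `1/n`. -/
noncomputable def stdBitMut {n : ℕ} (x : Individual n) : PMF (Individual n) :=
  if h : n = 0 then PMF.pure x
  else
    (bernoulliVec ((n : ℝ≥0∞))⁻¹
        (ENNReal.inv_le_one.mpr (by exact_mod_cast Nat.one_le_iff_ne_zero.mpr h)) n).map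
      fun mask => fun j => if mask j then !x j else x j

/-- One iteration of the (G)SEMO maximizing `f`, with mutation operator `mutOp`:
choose a parent uniformly at random from the population, mutate it, and perform
survival selection. -/
noncomputable def semoStep {n : ℕ} (f : Individual n → ℝ × ℝ)
    (mutOp : Individual n → PMF (Individual n))
    (P : Finset (Individual n)) : PMF (Finset (Individual n)) :=
  if h : P.Nonempty then
    (PMF.uniformOfFinset P h).bind fun x => (mutOp x).map fun y => updatePop f P y
  else PMF.pure P

/-- One iteration of the modified (G)SEMO: choose `i ∈ {0, …, m}` uniformly at random;
if the population contains no individual `z` with `idx z = i`, nothing happens;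
otherwise the (unique) such individual is the parent. -/
noncomputable def modStep {n : ℕ} (f : Individual n → ℝ × ℝ)
    (mutOp : Individual n → PMF (Individual n))
    (idx : Individual n → ℕ) (m : ℕ)
    (P : Finset (Individual n)) : PMF (Finset (Individual n)) :=
  (PMF.uniformOfFintype (Fin (m + 1))).bind fun i =>
    let S := P.filter fun z => idx z = (i : ℕ)
    if h : S.Nonempty then
      (PMF.uniformOfFinset S h).bind fun x => (mutOp x).map fun y => updatePop f P y
    else PMF.pure P

/-- Distribution of the trajectory (list of states, most recent first) of `t` iterations of
the Markov chain with one-step kernel `step`, started in state `s`. The resulting lists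
have length `t + 1` and record the states `P⁽ᵗ⁾, …, P⁽⁰⁾`. -/
noncomputable def run {σ : Type*} [Inhabited σ] (step : σ → PMF σ) (s : σ) : ℕ → PMF (List σ)
  | 0 => PMF.pure [s]
  | t + 1 => (run step s t).bind fun l => (step l.headI).map fun s' => s' :: l

/-- The probability that a sample from `p` lies in the event `E`. -/
noncomputable def prob {α : Type*} (p : PMF α) (E : Set α) : ℝ≥0∞ := p.toOuterMeasure E

/-- The uniform distribution on `{0,1}ⁿ` used for initialization. -/
noncomputable def uniformInit (n : ℕ) : PMF (Individual n) :=
  PMF.uniformOfFintype (Individual n)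

/-- The number of ones of a bit string. -/
def ones {n : ℕ} (x : Individual n) : ℕ :=
  (Finset.univ.filter fun i : Fin n => x i = true).card

/-- The number of zeros of a bit string. -/
def zeros {n : ℕ} (x : Individual n) : ℕ :=
  (Finset.univ.filter fun i : Fin n => x i = false).card

/-- `g₁ x`: the number of ones in the first half (positions `0, …, n/2 - 1`). -/
def g1 {n : ℕ} (x : Individual n) : ℕ :=
  (Finset.univ.filter fun i : Fin n => (i : ℕ) < n / 2 ∧ x i = true).card

/-- `g₂ x`: the number of ones in the second half (positions `n/2, …, n - 1`). -/
def g2 {n : ℕ} (x : Individual n) : ℕ :=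
  (Finset.univ.filter fun i : Fin n => n / 2 ≤ (i : ℕ) ∧ x i = true).card

/-- The COCZ benchmark: `COCZ(x) = (g₁(x) + g₂(x), g₁(x) + n/2 − g₂(x))`. -/
noncomputable def cocz {n : ℕ} (x : Individual n) : ℝ × ℝ :=
  (((g1 x + g2 x : ℕ) : ℝ), (g1 x : ℝ) + (n : ℝ) / 2 - (g2 x : ℝ))

/-- The OneMinMax benchmark: `OMM(x) = (|x|₁, n − |x|₁)`. -/
noncomputable def omm {n : ℕ} (x : Individual n) : ℝ × ℝ :=
  ((ones x : ℝ), (n : ℝ) - (ones x : ℝ))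

/-- The OJZJ benchmark with gap parameter `k`. -/
noncomputable def ojzj (n k : ℕ) (x : Individual n) : ℝ × ℝ :=
  ((if ones x ≤ n - k ∨ x = fun _ => true then ((k + ones x : ℕ) : ℝ)
      else ((n - ones x : ℕ) : ℝ)),
   (if zeros x ≤ n - k ∨ x = fun _ => false then ((k + zeros x : ℕ) : ℝ)
      else ((n - zeros x : ℕ) : ℝ)))

open Finset
open scoped Nat

section Expectation

variable {β γ : Type*}

noncomputable def expect (p : PMF β) (f : β → ℝ≥0∞) : ℝ≥0∞ := ∑' b, p b * f b

lemma expect_pure (a : β) (f : β → ℝ≥0∞) : expect (PMF.pure a) f = f a := by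
  rw [expect, tsum_eq_single a fun b hb => by simp [PMF.pure_apply, hb]]
  simp

lemma expect_bind (p : PMF β) (q : β → PMF γ) (f : γ → ℝ≥0∞) :
    expect (p.bind q) f = expect p fun b => expect (q b) f := by
  simp only [expect, PMF.bind_apply, ← ENNReal.tsum_mul_right, ← ENNReal.tsum_mul_left]
  rw [ENNReal.tsum_comm]
  exact tsum_congr fun b => tsum_congr fun c => by ring

lemma expect_map (p : PMF β) (g : β → γ) (f : γ → ℝ≥0∞) :
    expect (p.map g) f = expect p (f ∘ g) := by
  rw [PMF.map, expect_bind]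
  simp only [Function.comp_apply, expect_pure]
  rfl

lemma expect_mono {p : PMF β} {f g : β → ℝ≥0∞} (h : ∀ b ∈ p.support, f b ≤ g b) :
    expect p f ≤ expect p g := by
  refine ENNReal.tsum_le_tsum fun b => ?_
  by_cases hb : b ∈ p.support
  · exact mul_le_mul_right (h b hb) _
  · simp [(PMF.mem_support_iff p b).not_left.mp hb]

lemma expect_const (p : PMF β) (c : ℝ≥0∞) : expect p (fun _ => c) = c := by
  rw [expect, ENNReal.tsum_mul_right, p.tsum_coe, one_mul]

lemma expect_const_mul (p : PMF β) (c : ℝ≥0∞) (f : β → ℝ≥0∞) :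
    expect p (fun b => c * f b) = c * expect p f := by
  rw [expect, expect, ← ENNReal.tsum_mul_left]
  exact tsum_congr fun b => by ring

lemma expect_add (p : PMF β) (f g : β → ℝ≥0∞) :
    expect p (fun b => f b + g b) = expect p f + expect p g := by
  simp only [expect, mul_add, ENNReal.tsum_add]

lemma expect_finsetSum {ι : Type*} (p : PMF β) (s : Finset ι) (F : ι → β → ℝ≥0∞) :
    expect p (fun b => ∑ i ∈ s, F i b) = ∑ i ∈ s, expect p (F i) := by
  simp only [expect, Finset.mul_sum]
  exact Summable.tsum_finsetSum fun _ _ => ENNReal.summable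

lemma expect_bind_uniformOfFinset {s : Finset β} (hs : s.Nonempty) (q : β → PMF γ)
    (f : γ → ℝ≥0∞) :
    expect ((PMF.uniformOfFinset s hs).bind q) f = ∑ x ∈ s, (#s : ℝ≥0∞)⁻¹ * expect (q x) f := by
  rw [expect_bind, expect, tsum_eq_sum fun x hx => by
    rw [PMF.uniformOfFinset_apply, if_neg hx, zero_mul]]
  exact Finset.sum_congr rfl fun x hx => by rw [PMF.uniformOfFinset_apply, if_pos hx]

lemma expect_indicator (p : PMF β) (E : Set β) (c : ℝ≥0∞) :
    expect p (E.indicator fun _ => c) = c * prob p E := by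
  rw [expect, prob, PMF.toOuterMeasure_apply, ← ENNReal.tsum_mul_left]
  refine tsum_congr fun b => ?_
  by_cases hb : b ∈ E <;> simp [hb, mul_comm]

lemma prob_le_expect {p : PMF β} {E : Set β} {f : β → ℝ≥0∞}
    (h : ∀ b ∈ p.support, b ∈ E → 1 ≤ f b) : prob p E ≤ expect p f := by
  rw [prob, PMF.toOuterMeasure_apply]
  refine ENNReal.tsum_le_tsum fun b => ?_
  by_cases hb : b ∈ p.support
  · by_cases hbE : b ∈ E
    · rw [Set.indicator_of_mem hbE]
      exact le_mul_of_one_le_right' (h b hb hbE)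
    · simp [hbE]
  · simp [(PMF.mem_support_iff p b).not_left.mp hb]

lemma prob_mono {p : PMF β} {E F : Set β} (h : ∀ b ∈ p.support, b ∈ E → b ∈ F) :
    prob p E ≤ prob p F :=
  p.toOuterMeasure_mono fun b hb => h b hb.2 hb.1

lemma one_sub_le_prob {p : PMF β} {E : Set β} {ε : ℝ≥0∞} (h : prob p Eᶜ ≤ ε) :
    1 - ε ≤ prob p E := by
  rw [tsub_le_iff_right]
  calc (1 : ℝ≥0∞) = p.toOuterMeasure (E ∪ Eᶜ) :=
        ((PMF.toOuterMeasure_apply_eq_one_iff p _).mpr (by simp)).symm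
    _ ≤ prob p E + prob p Eᶜ := MeasureTheory.measure_union_le _ _
    _ ≤ prob p E + ε := by gcongr

lemma prob_uniformOfFintype_le [Fintype β] [Nonempty β] {E : Set β} {T : Finset β}
    (h : E ⊆ T) : prob (PMF.uniformOfFintype β) E ≤ #T * (Fintype.card β : ℝ≥0∞)⁻¹ := by
  calc prob (PMF.uniformOfFintype β) E ≤ prob (PMF.uniformOfFintype β) T :=
        prob_mono fun _ _ hb => h hb
    _ = #T * (Fintype.card β : ℝ≥0∞)⁻¹ := by
        rw [prob, PMF.toOuterMeasure_uniformOfFintype_apply]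
        simp [Fintype.card_subtype, div_eq_mul_inv]

end Expectation

section Run

variable {σ : Type*} [Inhabited σ] {step : σ → PMF σ} {s : σ}

lemma mem_support_run_succ {t : ℕ} {l : List σ} (hl : l ∈ (run step s (t + 1)).support) :
    ∃ l' ∈ (run step s t).support, ∃ a ∈ (step l'.headI).support, l = a :: l' := by
  rw [run, PMF.support_bind] at hl
  obtain ⟨l', hl', hl⟩ := Set.mem_iUnion₂.mp hl
  rw [PMF.support_map] at hl
  obtain ⟨a, ha, rfl⟩ := hl
  exact ⟨l', hl', a, ha, rfl⟩

lemma run_support_head {I : σ → Prop} (h₀ : I s) (hI : ∀ a, I a → ∀ b ∈ (step a).support, I b) :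
    ∀ t, ∀ l ∈ (run step s t).support, I l.headI
  | 0, l, hl => by
    rw [run, PMF.support_pure, Set.mem_singleton_iff] at hl
    exact hl ▸ h₀
  | t + 1, l, hl => by
    obtain ⟨l', hl', a, ha, rfl⟩ := mem_support_run_succ hl
    exact hI _ (run_support_head h₀ hI t l' hl') a ha

lemma run_support_head_le_of_mem {V : σ → ℕ} (hV : ∀ a, ∀ b ∈ (step a).support, V b ≤ V a) :
    ∀ t, ∀ l ∈ (run step s t).support, ∀ Q ∈ l, V l.headI ≤ V Q
  | 0, l, hl, Q, hQ => by
    rw [run, PMF.support_pure, Set.mem_singleton_iff] at hl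
    subst hl
    rw [List.mem_singleton.mp hQ]
    rfl
  | t + 1, l, hl, Q, hQ => by
    obtain ⟨l', hl', a, ha, rfl⟩ := mem_support_run_succ hl
    rcases List.mem_cons.mp hQ with rfl | hQ
    · exact le_rfl
    · exact (hV _ a ha).trans (run_support_head_le_of_mem hV t l' hl' Q hQ)

lemma expect_run_le {I : σ → Prop} {V : σ → ℝ≥0∞} {r : ℝ≥0∞} (h₀ : I s)
    (hI : ∀ a, I a → ∀ b ∈ (step a).support, I b) (hV : ∀ a, I a → expect (step a) V ≤ r * V a) :
    ∀ t, expect (run step s t) (fun l => V l.headI) ≤ r ^ t * V s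
  | 0 => by rw [run, expect_pure, pow_zero, one_mul]; rfl
  | t + 1 => calc
      expect (run step s (t + 1)) (fun l => V l.headI)
          = expect (run step s t) fun l => expect (step l.headI) V := by
        rw [run, expect_bind]
        simp only [expect_map]
        rfl
      _ ≤ expect (run step s t) fun l => r * V l.headI :=
        expect_mono fun l hl => hV _ (run_support_head h₀ hI t l hl)
      _ ≤ r ^ (t + 1) * V s := by
        rw [expect_const_mul, pow_succ', mul_assoc]
        gcongr
        exact expect_run_le h₀ hI hV t

end Run

section Bernoulli

variable (p : ℝ≥0∞) (hp : p ≤ 1)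

lemma card_eq_card_preimage_succ_add {m : ℕ} (S : Finset (Fin (m + 1))) :
    #S = #(S.preimage Fin.succ (Fin.succ_injective m).injOn) + if 0 ∈ S then 1 else 0 := by
  have himage : S.erase 0 = (S.preimage Fin.succ (Fin.succ_injective m).injOn).map (Fin.succEmb m) := by
    ext i
    cases i using Fin.cases <;> simp
  have hcard := congrArg Finset.card himage
  rw [Finset.card_map] at hcard
  split_ifs with h0
  · rw [← hcard, Finset.card_erase_add_one h0]
  · rw [← hcard, Finset.erase_eq_of_notMem h0, add_zero]

lemma prob_bernoulliVec_forall_true :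
    ∀ (m : ℕ) (S : Finset (Fin m)),
      prob (bernoulliVec p hp m) {v | ∀ i ∈ S, v i = true} = p ^ #S
  | 0, S => by
    rw [Finset.eq_empty_of_isEmpty S, bernoulliVec, prob, PMF.toOuterMeasure_pure_apply]
    simp
  | m + 1, S => by
    set T := S.preimage Fin.succ (Fin.succ_injective m).injOn
    have hpre : ∀ b : Bool, (fun w : Fin m → Bool => (Fin.cons b w : Fin (m + 1) → Bool)) ⁻¹'
        {v | ∀ i ∈ S, v i = true} = if 0 ∈ S ∧ b = false then ∅ else {w | ∀ j ∈ T, w j = true} := by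
      intro b
      ext w
      simp only [Set.mem_preimage, Set.mem_ofPred_eq, Fin.forall_fin_succ, Fin.cons_zero,
        Fin.cons_succ, T, Finset.mem_preimage]
      split_ifs with h <;> cases b <;> simp_all
    rw [bernoulliVec, prob, PMF.toOuterMeasure_bind_apply, tsum_bool]
    simp only [PMF.toOuterMeasure_map_apply, hpre, PMF.ofFintype_apply]
    have ih := prob_bernoulliVec_forall_true m T
    rw [prob] at ih
    have hS : #S = #T + if 0 ∈ S then 1 else 0 := card_eq_card_preimage_succ_add S
    rw [hS]
    by_cases h0 : 0 ∈ S
    · simp [h0, ih, pow_succ, mul_comm]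
    · simp only [h0, false_and, if_false, ih, add_zero, cond_false, cond_true, ← add_mul,
        tsub_add_cancel_of_le hp, one_mul]

lemma prob_bernoulliVec_le_card_filter (m : ℕ) (A : Finset (Fin m)) (k : ℕ) :
    prob (bernoulliVec p hp m) {v | k ≤ #(A.filter fun i => v i = true)} ≤ (#A).choose k * p ^ k :=
  calc prob (bernoulliVec p hp m) {v | k ≤ #(A.filter fun i => v i = true)}
      ≤ prob (bernoulliVec p hp m) (⋃ S ∈ A.powersetCard k, {v | ∀ i ∈ S, v i = true}) := by
        refine prob_mono fun v _ hv => ?_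
        obtain ⟨S, hS, hScard⟩ := Finset.exists_subset_card_eq hv
        exact Set.mem_biUnion (Finset.mem_powersetCard.mpr
          ⟨hS.trans (Finset.filter_subset _ _), hScard⟩) fun i hi => (Finset.mem_filter.mp (hS hi)).2
    _ ≤ ∑ S ∈ A.powersetCard k, prob (bernoulliVec p hp m) {v | ∀ i ∈ S, v i = true} :=
        MeasureTheory.measure_biUnion_finset_le _ _
    _ = (#A).choose k * p ^ k := by
        rw [Finset.sum_congr rfl fun S hS => by
          rw [prob_bernoulliVec_forall_true, (Finset.mem_powersetCard.mp hS).2]]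
        rw [Finset.sum_const, Finset.card_powersetCard, nsmul_eq_mul]

end Bernoulli

section Selection

variable {n : ℕ} {f : Individual n → ℝ × ℝ} {P : Finset (Individual n)} {y w : Individual n}

lemma weaklyDom_refl (u : ℝ × ℝ) : weaklyDom u u := ⟨le_rfl, le_rfl⟩

lemma weaklyDom.trans {u v w : ℝ × ℝ} (h₁ : weaklyDom u v) (h₂ : weaklyDom v w) :
    weaklyDom u w :=
  ⟨h₂.1.trans h₁.1, h₂.2.trans h₁.2⟩

lemma mem_updatePop :
    w ∈ updatePop f P y ↔ (w ∈ P ∧ ¬ weaklyDom (f y) (f w)) ∨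
      (w = y ∧ ∀ z ∈ P, ¬ weaklyDom (f y) (f z) → ¬ strictlyDom (f z) (f y)) := by
  simp only [updatePop]
  split_ifs with h
  · simp only [Finset.mem_filter]
    refine ⟨Or.inl, ?_⟩
    rintro (hw | ⟨-, hy⟩)
    · exact hw
    · obtain ⟨z, hz, hzy⟩ := h
      exact absurd hzy (hy z (Finset.mem_filter.mp hz).1 (Finset.mem_filter.mp hz).2)
  · push Not at h
    simp only [Finset.mem_insert, Finset.mem_filter]
    constructor
    · rintro (rfl | hw)
      · exact Or.inr ⟨rfl, fun z hz hzy => h z (Finset.mem_filter.mpr ⟨hz, hzy⟩)⟩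
      · exact Or.inl hw
    · rintro (hw | ⟨rfl, -⟩)
      · exact Or.inr hw
      · exact Or.inl rfl

lemma exists_mem_updatePop_weaklyDom {z : Individual n} (hz : z ∈ P) :
    ∃ w ∈ updatePop f P y, weaklyDom (f w) (f z) := by
  by_cases hyz : weaklyDom (f y) (f z)
  · by_cases hy : ∀ u ∈ P, ¬ weaklyDom (f y) (f u) → ¬ strictlyDom (f u) (f y)
    · exact ⟨y, mem_updatePop.mpr (Or.inr ⟨rfl, hy⟩), hyz⟩
    · push Not at hy
      obtain ⟨u, hu, huy, hdom⟩ := hy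
      exact ⟨u, mem_updatePop.mpr (Or.inl ⟨hu, huy⟩), hdom.1.trans hyz⟩
  · exact ⟨z, mem_updatePop.mpr (Or.inl ⟨hz, hyz⟩), weaklyDom_refl _⟩

lemma updatePop_nonempty : (updatePop f P y).Nonempty := by
  simp only [updatePop]
  split_ifs with h
  · obtain ⟨z, hz, -⟩ := h
    exact ⟨z, hz⟩
  · exact Finset.insert_nonempty _ _

lemma updatePop_subset : updatePop f P y ⊆ insert y P := fun w hw => by
  rcases mem_updatePop.mp hw with hw | hw
  · exact Finset.mem_insert_of_mem hw.1
  · exact hw.1 ▸ Finset.mem_insert_self _ _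

lemma validPop_updatePop (hP : validPop f P) : validPop f (updatePop f P y) := by
  intro a ha b hb hab hdom
  rcases mem_updatePop.mp ha with ⟨haP, hay⟩ | ⟨rfl, -⟩
  · rcases mem_updatePop.mp hb with ⟨hbP, -⟩ | ⟨rfl, hb⟩
    · exact hP a haP b hbP hab hdom
    · by_cases hfab : f a = f b
      · exact hay (hfab ▸ weaklyDom_refl _)
      · exact hb a haP hay ⟨hdom, hfab⟩
  · rcases mem_updatePop.mp hb with ⟨-, hby⟩ | ⟨rfl, -⟩
    · exact hby hdom
    · exact hab rfl

lemma mem_image_updatePop_of_mem_paretoFront {z : Individual n} (hz : z ∈ P)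
    (hfront : f z ∈ paretoFront f) : f z ∈ f '' (updatePop f P y : Set (Individual n)) := by
  obtain ⟨w, hw, hwz⟩ := exists_mem_updatePop_weaklyDom (f := f) (y := y) hz
  obtain ⟨x, hx, hopt⟩ := hfront
  refine ⟨w, hw, ?_⟩
  by_contra hne
  exact hopt w ⟨hx ▸ hwz, hx ▸ hne⟩

end Selection

section COCZ

variable {n : ℕ}

-- The positions keeping `(cocz x).2` below its maximum `n`.
def badPos (x : Individual n) : Finset (Fin n) :=
  Finset.univ.filter fun i => ((i : ℕ) < n / 2 ∧ x i = false) ∨ (n / 2 ≤ (i : ℕ) ∧ x i = true)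

def defect (x : Individual n) : ℕ := #(badPos x)

lemma mem_badPos {x : Individual n} {i : Fin n} :
    i ∈ badPos x ↔ ((i : ℕ) < n / 2 ∧ x i = false) ∨ (n / 2 ≤ (i : ℕ) ∧ x i = true) := by
  simp [badPos]

lemma card_filter_val_lt {k : ℕ} (hk : k ≤ n) : #(Finset.univ.filter fun i : Fin n => (i : ℕ) < k) = k := by
  rw [Fin.card_filter_val_lt, min_eq_right hk]

lemma g1_add_card_zeros_first_half (x : Individual n) :
    g1 x + #(Finset.univ.filter fun i : Fin n => (i : ℕ) < n / 2 ∧ x i = false) = n / 2 := by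
  rw [g1, ← Finset.card_union_of_disjoint, ← Finset.filter_or]
  · refine ((congrArg Finset.card ?_).trans (card_filter_val_lt (Nat.div_le_self n 2)))
    ext i
    simp only [Finset.mem_filter, Finset.mem_univ, true_and]
    cases x i <;> simp
  · exact Finset.disjoint_filter.mpr fun i _ h₁ h₂ => by simp_all

lemma defect_add_g1 (x : Individual n) : defect x + g1 x = n / 2 + g2 x := by
  have hsplit : defect x =
      #(Finset.univ.filter fun i : Fin n => (i : ℕ) < n / 2 ∧ x i = false) + g2 x := by
    rw [defect, badPos, Finset.filter_or, Finset.card_union_of_disjoint, g2]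
    exact Finset.disjoint_filter.mpr fun i _ h₁ h₂ => by omega
  have := g1_add_card_zeros_first_half x
  omega

lemma g1_le_half (x : Individual n) : g1 x ≤ n / 2 := by
  have := g1_add_card_zeros_first_half x
  omega

lemma defect_eq_g2 {x : Individual n} (hx : g1 x = n / 2) : defect x = g2 x := by
  have := defect_add_g1 x
  omega

lemma cocz_snd (hn : Even n) (x : Individual n) : (cocz x).2 = n - defect x := by
  have h : (defect x : ℝ) + g1 x = (n / 2 : ℕ) + g2 x := by exact_mod_cast defect_add_g1 x
  rw [Nat.cast_div_charZero (even_iff_two_dvd.mp hn), Nat.cast_ofNat] at h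
  simp only [cocz]
  linarith

lemma defect_le_of_weaklyDom (hn : Even n) {x z : Individual n}
    (h : weaklyDom (cocz x) (cocz z)) : defect x ≤ defect z := by
  have h₂ := h.2
  rw [cocz_snd hn, cocz_snd hn] at h₂
  exact_mod_cast (sub_le_sub_iff_left _).mp h₂

lemma defect_injOn (hn : Even n) {P : Finset (Individual n)} (hP : validPop cocz P) :
    Set.InjOn defect (P : Set (Individual n)) := by
  intro x hx z hz hxz
  by_contra hne
  have h₂ : (cocz x).2 = (cocz z).2 := by rw [cocz_snd hn, cocz_snd hn, hxz]
  rcases le_total (cocz x).1 (cocz z).1 with h₁ | h₁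
  · exact hP z hz x hx (Ne.symm hne) ⟨h₁, h₂.le⟩
  · exact hP x hx z hz hne ⟨h₁, h₂.ge⟩

lemma cocz_mem_paretoFront {x : Individual n} (hx : g1 x = n / 2) :
    cocz x ∈ paretoFront (cocz (n := n)) := by
  refine ⟨x, rfl, fun z ⟨⟨h₁, h₂⟩, hne⟩ => ?_⟩
  have hsum : ∀ w : Individual n, (cocz w).1 + (cocz w).2 = 2 * (g1 w : ℝ) + n / 2 := fun w => by
    simp only [cocz]
    push_cast
    ring
  have hlt : (cocz x).1 + (cocz x).2 < (cocz z).1 + (cocz z).2 := by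
    rcases h₁.lt_or_eq with h₁ | h₁
    · linarith
    · rcases h₂.lt_or_eq with h₂ | h₂
      · linarith
      · exact absurd (Prod.ext h₁.symm h₂.symm) hne
  rw [hsum, hsum, hx] at hlt
  have : n / 2 < g1 z := by exact_mod_cast (by linarith : ((n / 2 : ℕ) : ℝ) < g1 z)
  exact absurd (g1_le_half z) (by omega)

noncomputable def minDefect (P : Finset (Individual n)) : ℕ :=
  sInf (defect '' (P : Set (Individual n)))

lemma minDefect_le {P : Finset (Individual n)} {x : Individual n} (hx : x ∈ P) :
    minDefect P ≤ defect x :=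
  Nat.sInf_le ⟨x, hx, rfl⟩

lemma exists_defect_eq_minDefect {P : Finset (Individual n)} (hP : P.Nonempty) :
    ∃ x ∈ P, defect x = minDefect P := by
  obtain ⟨x, hx⟩ := hP
  exact Nat.sInf_mem (s := defect '' (P : Set (Individual n))) ⟨defect x, x, hx, rfl⟩

lemma minDefect_eq_zero_of_covers (hn : Even n) {P : Finset (Individual n)}
    (hcov : covers cocz P) : minDefect P = 0 := by
  let optimum : Individual n := fun i => decide ((i : ℕ) < n / 2)
  have hopt : defect optimum = 0 := by
    rw [defect, Finset.card_eq_zero, badPos, Finset.filter_eq_empty_iff]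
    intro i _
    by_cases h : (i : ℕ) < n / 2 <;> simp [optimum, h]
  have hg1 : g1 optimum = n / 2 := by
    have := defect_add_g1 optimum
    have := g1_le_half optimum
    omega
  obtain ⟨x, hx, hxopt⟩ := hcov (cocz_mem_paretoFront hg1)
  have : (defect x : ℝ) = defect optimum := by
    have := congrArg Prod.snd hxopt
    rw [cocz_snd hn, cocz_snd hn] at this
    linarith
  exact Nat.le_zero.mp (hopt ▸ (Nat.cast_injective this).symm ▸ minDefect_le hx)

lemma minDefect_updatePop_le (hn : Even n) {P : Finset (Individual n)} (hP : P.Nonempty)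
    (y : Individual n) : minDefect (updatePop cocz P y) ≤ minDefect P := by
  obtain ⟨z, hz, hzmin⟩ := exists_defect_eq_minDefect hP
  obtain ⟨w, hw, hwz⟩ := exists_mem_updatePop_weaklyDom (f := cocz) (y := y) hz
  exact hzmin ▸ (minDefect_le hw).trans (defect_le_of_weaklyDom hn hwz)

lemma min_le_minDefect_updatePop {P : Finset (Individual n)} (y : Individual n) :
    min (minDefect P) (defect y) ≤ minDefect (updatePop cocz P y) := by
  obtain ⟨w, hw, hwmin⟩ := exists_defect_eq_minDefect updatePop_nonempty
  rw [← hwmin]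
  rcases Finset.mem_insert.mp (updatePop_subset hw) with rfl | hwP
  · exact min_le_right _ _
  · exact (min_le_left _ _).trans (minDefect_le hwP)

end COCZ

section Mutation

variable {n : ℕ}

def flipMask (x : Individual n) (mask : Fin n → Bool) : Individual n :=
  fun j => if mask j then !x j else x j

lemma defect_le_defect_flipMask_add (x : Individual n) (mask : Fin n → Bool) :
    defect x ≤ defect (flipMask x mask) + #((badPos x).filter fun i => mask i = true) := by
  have hsub : badPos x \ (badPos x).filter (fun i => mask i = true) ⊆ badPos (flipMask x mask) := by
    intro i hi
    simp only [Finset.mem_sdiff, Finset.mem_filter, not_and, Bool.not_eq_true] at hi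
    rw [mem_badPos, flipMask, if_neg (by simp [hi.2 hi.1])]
    exact mem_badPos.mp hi.1
  have := Finset.card_le_card hsub
  rw [Finset.card_sdiff_of_subset (Finset.filter_subset _ _)] at this
  unfold defect
  omega

lemma flipOne_eq_flipMask (x : Individual n) (i : Fin n) :
    flipOne x i = flipMask x fun j => decide (j = i) := by
  ext j
  by_cases h : j = i
  · subst h; simp [flipOne, flipMask]
  · simp [flipOne, flipMask, h]

lemma prob_oneBitMut_defect_le (hn : n ≠ 0) (x : Individual n) {m : ℕ} (hm : m < defect x) :
    prob (oneBitMut x) {y | defect y ≤ m}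
      ≤ (defect x).choose (defect x - m) * (n : ℝ≥0∞)⁻¹ ^ (defect x - m) := by
  have : Nonempty (Fin n) := ⟨⟨0, Nat.pos_of_ne_zero hn⟩⟩
  rw [oneBitMut, dif_neg hn, prob, PMF.toOuterMeasure_map_apply]
  have hflip : ∀ i ∈ flipOne x ⁻¹' {y | defect y ≤ m}, i ∈ badPos x ∧ defect x - m = 1 := by
    intro i hi
    have hle := defect_le_defect_flipMask_add x fun j => decide (j = i)
    rw [← flipOne_eq_flipMask] at hle
    have hcard : #((badPos x).filter fun j => decide (j = i) = true) = if i ∈ badPos x then 1 else 0 := by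
      simp only [decide_eq_true_eq, Finset.filter_eq']
      split_ifs <;> simp
    have : defect (flipOne x i) ≤ m := hi
    split_ifs at hcard with hi'
    · exact ⟨hi', by omega⟩
    · omega
  by_cases hk : defect x - m = 1
  · rw [hk, Nat.choose_one_right, pow_one]
    exact (prob_uniformOfFintype_le fun i hi => (hflip i hi).1).trans (by simp [defect])
  · have hempty : flipOne x ⁻¹' {y | defect y ≤ m} = ∅ :=
      Set.eq_empty_of_forall_notMem fun i hi => hk (hflip i hi).2
    simp [hempty]

lemma prob_stdBitMut_defect_le (hn : n ≠ 0) (x : Individual n) (m : ℕ) :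
    prob (stdBitMut x) {y | defect y ≤ m}
      ≤ (defect x).choose (defect x - m) * (n : ℝ≥0∞)⁻¹ ^ (defect x - m) := by
  rw [stdBitMut, dif_neg hn, prob, PMF.toOuterMeasure_map_apply]
  refine le_trans (prob_mono fun mask _ hmask => ?_) (prob_bernoulliVec_le_card_filter _ _ n _ _)
  have := defect_le_defect_flipMask_add x mask
  have : defect (flipMask x mask) ≤ m := hmask
  show defect x - m ≤ _
  omega

lemma prob_mutOp_defect_le (hn : n ≠ 0) {mutOp : Individual n → PMF (Individual n)}
    (hmut : mutOp = oneBitMut ∨ mutOp = stdBitMut) (x : Individual n) {m : ℕ} (hm : m < defect x) :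
    prob (mutOp x) {y | defect y ≤ m}
      ≤ (defect x).choose (defect x - m) * (n : ℝ≥0∞)⁻¹ ^ (defect x - m) := by
  rcases hmut with rfl | rfl
  · exact prob_oneBitMut_defect_le hn x hm
  · exact prob_stdBitMut_defect_le hn x m

end Mutation

section Estimates

lemma inv_pow_three_sub_inv_pow_three_le {x : ℝ} (hx : 0 < x) :
    1 / x ^ 3 - 1 / (x + 1) ^ 3 ≤ 3 / x ^ 4 := by
  rw [div_sub_div _ _ (by positivity) (by positivity), div_le_div_iff₀ (by positivity) (by positivity)]
  nlinarith [pow_pos hx 3, pow_pos hx 4, pow_pos hx 5, pow_pos hx 6, pow_pos hx 7]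

lemma succ_pow_four_le_factorial (i : ℕ) : (i + 1) ^ 4 ≤ 43 * i ! := by
  induction i with
  | zero => simp
  | succ i ih =>
    rcases Nat.lt_or_ge i 3 with hi | hi
    · interval_cases i <;> decide
    · rw [Nat.factorial_succ]
      have : (i + 2) ^ 4 ≤ (i + 1) * (i + 1) ^ 4 := by
        obtain ⟨j, rfl⟩ := Nat.exists_eq_add_of_le hi
        ring_nf
        nlinarith [Nat.zero_le j, sq_nonneg j, pow_pos (show 0 < j + 1 by omega) 3]
      calc (i + 1 + 1) ^ 4 ≤ (i + 1) * (i + 1) ^ 4 := this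
        _ ≤ (i + 1) * (43 * i !) := Nat.mul_le_mul_left _ ih
        _ = 43 * ((i + 1) * i !) := by ring

lemma pow_le_two_mul_half_pow_mul {q : ℝ} (hq₀ : 0 ≤ q) (hq : q ≤ 1 / 2) {i : ℕ} (hi : 1 ≤ i) :
    q ^ i ≤ 2 * (1 / 2) ^ i * q := by
  obtain ⟨j, rfl⟩ := Nat.exists_eq_add_of_le hi
  rw [pow_add, pow_one, add_comm 1 j, pow_succ (1 / 2 : ℝ)]
  have := pow_le_pow_left₀ hq₀ hq j
  nlinarith

lemma add_add_one_pow_four_le (m i : ℕ) :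
    ((m : ℝ) + i + 1) ^ 4 ≤ 43 * ((m : ℝ) + 1) ^ 4 * i ! := by
  have h : ((i : ℝ) + 1) ^ 4 ≤ 43 * i ! := by exact_mod_cast succ_pow_four_le_factorial i
  calc ((m : ℝ) + i + 1) ^ 4 ≤ (((m : ℝ) + 1) * (i + 1)) ^ 4 := by
        gcongr
        nlinarith [(Nat.cast_nonneg m : (0 : ℝ) ≤ m), (Nat.cast_nonneg i : (0 : ℝ) ≤ i)]
    _ ≤ ((m : ℝ) + 1) ^ 4 * (43 * i !) := by rw [mul_pow]; gcongr
    _ = 43 * ((m : ℝ) + 1) ^ 4 * i ! := by ring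

-- `258 = 3 · 2 · 43`, from the three estimates `hw`, `hratio` and `hfact`.
lemma weight_mul_choose_div_pow_le {n m i : ℕ} (hi : 1 ≤ i) (h : 2 * (m + i) ≤ n) :
    (1 / ((m : ℝ) + 1) ^ 3 - 1 / ((m : ℝ) + 2) ^ 3) * (m + i).choose i / (n : ℝ) ^ i
      ≤ 258 * (1 / 2) ^ i / (n * ((m : ℝ) + i + 1) ^ 3) := by
  set x : ℝ := m + 1
  set Y : ℝ := m + i
  have hY : 1 ≤ Y := by
    have : (1 : ℝ) ≤ i := by exact_mod_cast hi
    linarith [(Nat.cast_nonneg m : (0 : ℝ) ≤ m)]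
  have hYn : 2 * Y ≤ n := by simp only [Y]; exact_mod_cast h
  have hn : (0 : ℝ) < n := by linarith
  have hw : 1 / x ^ 3 - 1 / (x + 1) ^ 3 ≤ 3 / x ^ 4 :=
    inv_pow_three_sub_inv_pow_three_le (by positivity)
  have hchoose : ((m + i).choose i : ℝ) ≤ Y ^ i / i ! := by
    simpa [Y] using Nat.choose_le_pow_div (α := ℝ) i (m + i)
  have hratio : (Y / n) ^ i ≤ 2 * (1 / 2) ^ i * (Y / n) :=
    pow_le_two_mul_half_pow_mul (by positivity) (by rw [div_le_iff₀ hn]; linarith) hi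
  have hfact : (Y + 1) ^ 4 ≤ 43 * x ^ 4 * i ! := add_add_one_pow_four_le m i
  rw [show (m : ℝ) + 2 = x + 1 by ring]
  calc (1 / x ^ 3 - 1 / (x + 1) ^ 3) * (m + i).choose i / (n : ℝ) ^ i
      ≤ 3 / x ^ 4 * (Y ^ i / i !) / n ^ i := by gcongr
    _ = 3 / (x ^ 4 * i !) * (Y / n) ^ i := by rw [div_pow]; field_simp
    _ ≤ 3 / (x ^ 4 * i !) * (2 * (1 / 2) ^ i * (Y / n)) := by gcongr
    _ = 6 * (1 / 2) ^ i * Y / (n * (x ^ 4 * i !)) := by field_simp; ring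
    _ ≤ 6 * (1 / 2) ^ i * Y / (n * ((Y + 1) ^ 4 / 43)) := by gcongr; linarith
    _ = 258 * (1 / 2) ^ i * (Y / (Y + 1)) / (n * (Y + 1) ^ 3) := by field_simp; ring
    _ ≤ 258 * (1 / 2) ^ i * 1 / (n * (Y + 1) ^ 3) := by
        gcongr
        exact (div_le_one (by linarith)).mpr (by linarith)
    _ = 258 * (1 / 2) ^ i / (n * (Y + 1) ^ 3) := by rw [mul_one]

lemma sum_weight_mul_choose_div_pow_le {n Y : ℕ} (h : 2 * Y ≤ n) :
    ∑ m ∈ Finset.range Y,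
      (1 / ((m : ℝ) + 1) ^ 3 - 1 / ((m : ℝ) + 2) ^ 3) * Y.choose (Y - m) / (n : ℝ) ^ (Y - m)
      ≤ 258 / (n * ((Y : ℝ) + 1) ^ 3) := by
  have hterm : ∀ m ∈ Finset.range Y,
      (1 / ((m : ℝ) + 1) ^ 3 - 1 / ((m : ℝ) + 2) ^ 3) * Y.choose (Y - m) / (n : ℝ) ^ (Y - m)
        ≤ (1 / 2) ^ (Y - m) * (258 / (n * ((Y : ℝ) + 1) ^ 3)) := by
    intro m hm
    obtain ⟨i, hi, rfl⟩ : ∃ i, 1 ≤ i ∧ Y = m + i := ⟨Y - m, by simp at hm; omega, by simp at hm; omega⟩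
    rw [Nat.add_sub_cancel_left]
    calc _ ≤ 258 * (1 / 2) ^ i / (n * ((m : ℝ) + i + 1) ^ 3) := weight_mul_choose_div_pow_le hi h
      _ = _ := by push_cast; ring
  have hgeom : ∑ m ∈ Finset.range Y, (1 / 2 : ℝ) ^ (Y - m) ≤ 1 := by
    rw [← Finset.sum_range_reflect]
    calc ∑ j ∈ Finset.range Y, (1 / 2 : ℝ) ^ (Y - (Y - 1 - j))
        = 1 / 2 * ∑ j ∈ Finset.range Y, (1 / 2 : ℝ) ^ j := by
          rw [Finset.mul_sum]
          refine Finset.sum_congr rfl fun j hj => ?_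
          rw [← _root_.pow_succ', show Y - (Y - 1 - j) = j + 1 by have := Finset.mem_range.mp hj; omega]
      _ ≤ 1 / 2 * 2 := by gcongr; exact sum_geometric_two_le Y
      _ = 1 := by norm_num
  calc _ ≤ ∑ m ∈ Finset.range Y, (1 / 2) ^ (Y - m) * (258 / (n * ((Y : ℝ) + 1) ^ 3)) :=
        Finset.sum_le_sum hterm
    _ ≤ 258 / (n * ((Y : ℝ) + 1) ^ 3) := by
        rw [← Finset.sum_mul]
        exact mul_le_of_le_one_left (by positivity) hgeom

lemma sum_le_two_mul_of_le_half {b : ℕ → ℝ≥0∞} {Y : ℕ} (hb : ∀ v, Y ≤ v → b (v + 1) ≤ 2⁻¹ * b v)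
    {S : Finset ℕ} (hS : ∀ v ∈ S, Y ≤ v) : ∑ v ∈ S, b v ≤ 2 * b Y := by
  have hpow : ∀ j, b (Y + j) ≤ 2⁻¹ ^ j * b Y := by
    intro j
    induction j with
    | zero => simp
    | succ j ih =>
      calc b (Y + j + 1) ≤ 2⁻¹ * b (Y + j) := hb _ (Nat.le_add_right Y j)
        _ ≤ 2⁻¹ * (2⁻¹ ^ j * b Y) := by gcongr
        _ = 2⁻¹ ^ (j + 1) * b Y := by ring
  calc ∑ v ∈ S, b v ≤ ∑ v ∈ S, 2⁻¹ ^ (v - Y) * b Y :=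
        sum_le_sum fun v hv => by simpa [Nat.add_sub_cancel' (hS v hv)] using hpow (v - Y)
    _ = (∑ j ∈ S.image (· - Y), 2⁻¹ ^ j) * b Y := by
        rw [sum_image fun v hv w hw h => by have := hS v hv; have := hS w hw; omega, sum_mul]
    _ ≤ (∑' j, 2⁻¹ ^ j) * b Y := by gcongr; exact ENNReal.sum_le_tsum _
    _ = 2 * b Y := by rw [ENNReal.tsum_geometric, ENNReal.one_sub_inv_two, inv_inv]

lemma choose_mul_inv_pow_succ_le {n m v : ℕ} (hn : 2 * (m + 1) ≤ n) (hv : m ≤ v) :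
    ((v + 1).choose (v + 1 - m) : ℝ≥0∞) * (n : ℝ≥0∞)⁻¹ ^ (v + 1 - m)
      ≤ 2⁻¹ * ((v.choose (v - m) : ℝ≥0∞) * (n : ℝ≥0∞)⁻¹ ^ (v - m)) := by
  obtain ⟨d, rfl⟩ := Nat.exists_eq_add_of_le hv
  rw [show m + d + 1 - m = d + 1 by omega, Nat.add_sub_cancel_left]
  have hnat : 2 * (m + d + 1).choose (d + 1) ≤ n * (m + d).choose d := by
    refine Nat.le_of_mul_le_mul_right ?_ (Nat.succ_pos d)
    calc 2 * (m + d + 1).choose (d + 1) * (d + 1) = 2 * (m + d + 1) * (m + d).choose d := by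
          rw [mul_assoc, ← Nat.add_one_mul_choose_eq]; ring
      _ ≤ 2 * ((m + 1) * (d + 1)) * (m + d).choose d := by gcongr; nlinarith
      _ ≤ n * (d + 1) * (m + d).choose d := by rw [← mul_assoc]; gcongr
      _ = n * (m + d).choose d * (d + 1) := by ring
  have hkey : ((m + d + 1).choose (d + 1) : ℝ≥0∞) * (n : ℝ≥0∞)⁻¹ ≤ 2⁻¹ * ((m + d).choose d) := by
    rw [← ENNReal.div_eq_inv_mul, ENNReal.le_div_iff_mul_le (by simp) (by simp), mul_right_comm,
      ← div_eq_mul_inv]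
    exact ENNReal.div_le_of_le_mul (by rw [mul_comm, mul_comm _ (n : ℝ≥0∞)]; exact_mod_cast hnat)
  calc ((m + d + 1).choose (d + 1) : ℝ≥0∞) * (n : ℝ≥0∞)⁻¹ ^ (d + 1)
      = ((m + d + 1).choose (d + 1) * (n : ℝ≥0∞)⁻¹) * (n : ℝ≥0∞)⁻¹ ^ d := by ring
    _ ≤ 2⁻¹ * ((m + d).choose d) * (n : ℝ≥0∞)⁻¹ ^ d := by gcongr
    _ = _ := by ring

end Estimates

section Potential

noncomputable def pot (k : ℕ) : ℝ≥0∞ := ENNReal.ofReal (1 / ((k : ℝ) + 1) ^ 3)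

lemma pot_antitone : Antitone pot := fun a b hab => by
  unfold pot
  gcongr

lemma pot_zero : pot 0 = 1 := by simp [pot]

lemma pot_sub_pot_succ (m : ℕ) :
    pot m - pot (m + 1) = ENNReal.ofReal (1 / ((m : ℝ) + 1) ^ 3 - 1 / ((m : ℝ) + 2) ^ 3) := by
  rw [pot, pot, ← ENNReal.ofReal_sub _ (by positivity)]
  push_cast
  ring_nf

lemma sum_Ico_pot_sub_pot_succ {a b : ℕ} (hab : a ≤ b) :
    ∑ m ∈ Ico a b, (pot m - pot (m + 1)) = pot a - pot b := by
  induction b, hab using Nat.le_induction with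
  | base => simp
  | succ b hab ih =>
    rw [Finset.sum_Ico_succ_top hab, ih]
    exact tsub_add_tsub_cancel (pot_antitone hab) (pot_antitone b.le_succ)

-- Stated with indicators so that its expectation is a sum of `pot m - pot (m + 1)` weighted by
-- the probabilities of reaching defect `m`.
lemma pot_minDefect_updatePop_le {n : ℕ} (P : Finset (Individual n)) (y : Individual n) :
    pot (minDefect (updatePop cocz P y)) ≤ pot (minDefect P) +
      ∑ m ∈ range (minDefect P), {z | defect z ≤ m}.indicator (fun _ => pot m - pot (m + 1)) y := by
  have hmin := min_le_minDefect_updatePop (P := P) y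
  rcases le_or_gt (minDefect P) (defect y) with hle | hlt
  · rw [min_eq_left hle] at hmin
    exact le_add_right (pot_antitone hmin)
  · rw [min_eq_right hlt.le] at hmin
    have hIco : ∑ m ∈ range (minDefect P), {z | defect z ≤ m}.indicator (fun _ => pot m - pot (m + 1)) y
        = ∑ m ∈ Ico (defect y) (minDefect P), (pot m - pot (m + 1)) := by
      simp only [Set.indicator_apply, Set.mem_ofPred_eq]
      rw [← Finset.sum_filter]
      congr 1
      ext m
      simp only [Finset.mem_filter, Finset.mem_range, Finset.mem_Ico]
      omega
    calc pot (minDefect (updatePop cocz P y)) ≤ pot (defect y) := pot_antitone hmin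
      _ ≤ pot (minDefect P) + (pot (defect y) - pot (minDefect P)) := le_add_tsub
      _ = _ := by rw [hIco, sum_Ico_pot_sub_pot_succ hlt.le]

lemma sum_pot_sub_mul_choose_le {n Y : ℕ} (h : 2 * Y ≤ n) :
    ∑ m ∈ range Y, (pot m - pot (m + 1)) *
        (2 * ((Y.choose (Y - m) : ℝ≥0∞) * (n : ℝ≥0∞)⁻¹ ^ (Y - m)))
      ≤ ENNReal.ofReal (516 / n) * pot Y := by
  rcases Nat.eq_zero_or_pos Y with rfl | hY
  · simp
  have hn : (0 : ℝ) < n := by norm_cast; omega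
  have hw : ∀ m : ℕ, 0 ≤ 1 / ((m : ℝ) + 1) ^ 3 - 1 / ((m : ℝ) + 2) ^ 3 := fun m => by
    rw [sub_nonneg]; gcongr; linarith
  have hterm : ∀ m, (pot m - pot (m + 1)) *
      (2 * ((Y.choose (Y - m) : ℝ≥0∞) * (n : ℝ≥0∞)⁻¹ ^ (Y - m)))
      = ENNReal.ofReal (2 * ((1 / ((m : ℝ) + 1) ^ 3 - 1 / ((m : ℝ) + 2) ^ 3) *
          Y.choose (Y - m) / (n : ℝ) ^ (Y - m))) := by
    intro m
    rw [pot_sub_pot_succ, ← ENNReal.ofReal_natCast n, ← ENNReal.ofReal_inv_of_pos hn,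
      ← ENNReal.ofReal_pow (by positivity), ← ENNReal.ofReal_natCast (Y.choose _),
      ← ENNReal.ofReal_mul (by positivity), ← ENNReal.ofReal_ofNat 2,
      ← ENNReal.ofReal_mul (by norm_num), ← ENNReal.ofReal_mul (hw m), inv_pow]
    ring_nf
  calc _ = ENNReal.ofReal (2 * ∑ m ∈ range Y, (1 / ((m : ℝ) + 1) ^ 3 - 1 / ((m : ℝ) + 2) ^ 3) *
          Y.choose (Y - m) / (n : ℝ) ^ (Y - m)) := by
        rw [Finset.sum_congr rfl fun m _ => hterm m, Finset.mul_sum,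
          ENNReal.ofReal_sum_of_nonneg fun m _ => by have := hw m; positivity]
    _ ≤ ENNReal.ofReal (2 * (258 / (n * ((Y : ℝ) + 1) ^ 3))) := by
        gcongr
        exact sum_weight_mul_choose_div_pow_le h
    _ = ENNReal.ofReal (516 / n) * pot Y := by
        rw [pot, ← ENNReal.ofReal_mul (by positivity)]
        congr 1
        field_simp
        ring

end Potential

section Drift

variable {n : ℕ} {mutOp : Individual n → PMF (Individual n)} {P : Finset (Individual n)}

-- Members have distinct defects, all at least `minDefect P`, and the terms halve as the defect
-- grows.
lemma sum_choose_defect_mul_inv_pow_le (hn : Even n) (hP : validPop cocz P) {m : ℕ}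
    (hm : m < minDefect P) (h2 : 2 * minDefect P ≤ n) :
    ∑ x ∈ P, ((defect x).choose (defect x - m) : ℝ≥0∞) * (n : ℝ≥0∞)⁻¹ ^ (defect x - m)
      ≤ 2 * (((minDefect P).choose (minDefect P - m) : ℝ≥0∞) *
          (n : ℝ≥0∞)⁻¹ ^ (minDefect P - m)) := by
  set b : ℕ → ℝ≥0∞ := fun v => (v.choose (v - m) : ℝ≥0∞) * (n : ℝ≥0∞)⁻¹ ^ (v - m)
  rw [← Finset.sum_image (f := b) fun x hx z hz => defect_injOn hn hP hx hz]
  refine sum_le_two_mul_of_le_half (b := b)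
    (fun v hv => choose_mul_inv_pow_succ_le (by omega) (by omega)) fun v hv => ?_
  obtain ⟨x, hx, rfl⟩ := Finset.mem_image.mp hv
  exact minDefect_le hx

lemma expect_mutOp_pot_le (hn0 : n ≠ 0) (hmut : mutOp = oneBitMut ∨ mutOp = stdBitMut)
    {x : Individual n} (hx : x ∈ P) :
    expect (mutOp x) (fun y => pot (minDefect (updatePop cocz P y))) ≤ pot (minDefect P) +
      ∑ m ∈ range (minDefect P), (pot m - pot (m + 1)) *
        (((defect x).choose (defect x - m) : ℝ≥0∞) * (n : ℝ≥0∞)⁻¹ ^ (defect x - m)) := by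
  calc _ ≤ expect (mutOp x) (fun y => pot (minDefect P) + ∑ m ∈ range (minDefect P),
          {z | defect z ≤ m}.indicator (fun _ => pot m - pot (m + 1)) y) :=
        expect_mono fun y _ => pot_minDefect_updatePop_le P y
    _ = pot (minDefect P) + ∑ m ∈ range (minDefect P),
          (pot m - pot (m + 1)) * prob (mutOp x) {z | defect z ≤ m} := by
        rw [expect_add, expect_const, expect_finsetSum]
        simp only [expect_indicator]
    _ ≤ _ := by
        gcongr with m hm
        exact prob_mutOp_defect_le hn0 hmut x ((Finset.mem_range.mp hm).trans_le (minDefect_le hx))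

lemma expect_semoStep_pot_le (hn : Even n) (hn0 : n ≠ 0)
    (hmut : mutOp = oneBitMut ∨ mutOp = stdBitMut) (hP : validPop cocz P) (hne : P.Nonempty)
    (h2 : 2 * minDefect P ≤ n) :
    expect (semoStep cocz mutOp P) (fun Q => pot (minDefect Q))
      ≤ (1 + (#P : ℝ≥0∞)⁻¹ * ENNReal.ofReal (516 / n)) * pot (minDefect P) := by
  set Y := minDefect P
  have hcard : ∑ _x ∈ P, (#P : ℝ≥0∞)⁻¹ = 1 := by
    rw [Finset.sum_const, nsmul_eq_mul]
    exact ENNReal.mul_inv_cancel (by simpa using hne.ne_empty) (by simp)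
  rw [semoStep, dif_pos hne, expect_bind_uniformOfFinset]
  simp only [expect_map, Function.comp_def]
  calc ∑ x ∈ P, (#P : ℝ≥0∞)⁻¹ * expect (mutOp x) (fun y => pot (minDefect (updatePop cocz P y)))
      ≤ ∑ x ∈ P, (#P : ℝ≥0∞)⁻¹ * (pot Y + ∑ m ∈ range Y, (pot m - pot (m + 1)) *
          (((defect x).choose (defect x - m) : ℝ≥0∞) * (n : ℝ≥0∞)⁻¹ ^ (defect x - m))) := by
        gcongr with x hx
        exact expect_mutOp_pot_le hn0 hmut hx
    _ = pot Y + (#P : ℝ≥0∞)⁻¹ * ∑ m ∈ range Y, (pot m - pot (m + 1)) * ∑ x ∈ P,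
          (((defect x).choose (defect x - m) : ℝ≥0∞) * (n : ℝ≥0∞)⁻¹ ^ (defect x - m)) := by
        simp only [mul_add, Finset.sum_add_distrib, ← Finset.sum_mul, hcard, one_mul,
          Finset.mul_sum]
        rw [Finset.sum_comm]
    _ ≤ pot Y + (#P : ℝ≥0∞)⁻¹ * ∑ m ∈ range Y, (pot m - pot (m + 1)) *
          (2 * ((Y.choose (Y - m) : ℝ≥0∞) * (n : ℝ≥0∞)⁻¹ ^ (Y - m))) := by
        gcongr with m hm
        exact sum_choose_defect_mul_inv_pow_le hn hP (Finset.mem_range.mp hm) h2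
    _ ≤ pot Y + (#P : ℝ≥0∞)⁻¹ * (ENNReal.ofReal (516 / n) * pot Y) := by
        gcongr
        exact sum_pot_sub_mul_choose_le h2
    _ = _ := by ring

end Drift

section Invariant

variable {n : ℕ} {mutOp : Individual n → PMF (Individual n)}

lemma exists_eq_updatePop_of_mem_support {f : Individual n → ℝ × ℝ} {P Q : Finset (Individual n)}
    (hne : P.Nonempty) (hQ : Q ∈ (semoStep f mutOp P).support) : ∃ y, Q = updatePop f P y := by
  rw [semoStep, dif_pos hne, PMF.support_bind] at hQ
  obtain ⟨x, -, hQ⟩ := Set.mem_iUnion₂.mp hQ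
  rw [PMF.support_map] at hQ
  obtain ⟨y, -, rfl⟩ := hQ
  exact ⟨y, rfl⟩

lemma minDefect_le_of_mem_support_semoStep (hn : Even n) {P Q : Finset (Individual n)}
    (hQ : Q ∈ (semoStep cocz mutOp P).support) : minDefect Q ≤ minDefect P := by
  rcases P.eq_empty_or_nonempty with rfl | hne
  · rw [semoStep, dif_neg (by simp), PMF.support_pure, Set.mem_singleton_iff] at hQ
    rw [hQ]
  · obtain ⟨y, rfl⟩ := exists_eq_updatePop_of_mem_support hne hQ
    exact minDefect_updatePop_le hn hne y

/-- Validity makes the defects of the members distinct, keeping the values of `P₀` keeps the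
population size at least `#P₀`, and `2 * minDefect P ≤ n` is what the drift estimate needs. -/
def PopInvariant (P₀ P : Finset (Individual n)) : Prop :=
  validPop cocz P ∧ cocz '' (P₀ : Set (Individual n)) ⊆ cocz '' (P : Set (Individual n)) ∧
    2 * minDefect P ≤ n

lemma PopInvariant.card_le {P₀ P : Finset (Individual n)} (hP₀ : validPop cocz P₀)
    (h : PopInvariant P₀ P) : #P₀ ≤ #P := by
  have hinj : ∀ {Q : Finset (Individual n)}, validPop cocz Q → Set.InjOn cocz (Q : Set _) :=
    fun hQ x hx z hz hxz => by_contra fun hne => hQ x hx z hz hne ⟨hxz.ge.1, hxz.ge.2⟩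
  calc #P₀ = #(P₀.image cocz) := (Finset.card_image_of_injOn (hinj hP₀)).symm
    _ ≤ #(P.image cocz) := Finset.card_le_card (by simpa [← Finset.coe_subset] using h.2.1)
    _ ≤ #P := Finset.card_image_le

lemma PopInvariant.semoStep (hn : Even n) {P₀ : Finset (Individual n)} (hne : P₀.Nonempty)
    (hP₀ : ∀ x ∈ P₀, g1 x = n / 2) {P Q : Finset (Individual n)} (h : PopInvariant P₀ P)
    (hQ : Q ∈ (semoStep cocz mutOp P).support) : PopInvariant P₀ Q := by
  obtain ⟨hval, hfront, h2⟩ := h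
  have hPne : P.Nonempty := by
    obtain ⟨x, hx⟩ := hne
    obtain ⟨z, hz, -⟩ := hfront ⟨x, hx, rfl⟩
    exact ⟨z, hz⟩
  refine ⟨?_, ?_, (Nat.mul_le_mul_left 2 (minDefect_le_of_mem_support_semoStep hn hQ)).trans h2⟩
  · obtain ⟨y, rfl⟩ := exists_eq_updatePop_of_mem_support hPne hQ
    exact validPop_updatePop hval
  · obtain ⟨y, rfl⟩ := exists_eq_updatePop_of_mem_support hPne hQ
    rintro _ ⟨x, hx, rfl⟩
    obtain ⟨z, hz, hzx⟩ := hfront ⟨x, hx, rfl⟩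
    rw [← hzx]
    exact mem_image_updatePop_of_mem_paretoFront hz (hzx ▸ cocz_mem_paretoFront (hP₀ x hx))

lemma expect_semoStep_pot_le_of_invariant (hn : Even n) (hmut : mutOp = oneBitMut ∨ mutOp = stdBitMut)
    {α : ℝ} (hα : 0 < α) {P₀ P : Finset (Individual n)} (hP₀ : validPop cocz P₀)
    (hsize : α * n ≤ #P₀) (hn0 : n ≠ 0) (h : PopInvariant P₀ P) :
    expect (semoStep cocz mutOp P) (fun Q => pot (minDefect Q))
      ≤ (1 + ENNReal.ofReal (516 / (α * n ^ 2))) * pot (minDefect P) := by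
  have hcard : α * n ≤ #P := hsize.trans (by exact_mod_cast h.card_le hP₀)
  have hαn : 0 < α * n := by positivity
  have hne : P.Nonempty := Finset.card_pos.mp (by exact_mod_cast hαn.trans_le hcard)
  refine (expect_semoStep_pot_le hn hn0 hmut h.1 hne h.2.2).trans ?_
  gcongr
  calc (#P : ℝ≥0∞)⁻¹ * ENNReal.ofReal (516 / n)
      ≤ (ENNReal.ofReal (α * n))⁻¹ * ENNReal.ofReal (516 / n) := by
        gcongr
        rw [← ENNReal.ofReal_natCast]
        exact ENNReal.ofReal_le_ofReal hcard
    _ = ENNReal.ofReal (516 / (α * n ^ 2)) := by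
        rw [← ENNReal.ofReal_inv_of_pos hαn, ← ENNReal.ofReal_mul (by positivity)]
        congr 1
        field_simp

end Invariant

section Conclusion

variable {n : ℕ} {mutOp : Individual n → PMF (Individual n)}

lemma one_add_pow_mul_pot_le {T Y : ℕ} {ε : ℝ} (hn : 0 < n) (hε : 0 ≤ ε)
    (hεT : ε * T ≤ Real.log n / 4) (hY : √n ≤ Y) :
    (1 + ENNReal.ofReal ε) ^ T * pot Y ≤ ENNReal.ofReal (1 / n) := by
  have hn' : (0 : ℝ) < n := Nat.cast_pos.mpr hn
  rw [← ENNReal.ofReal_one, ← ENNReal.ofReal_add zero_le_one hε,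
    ← ENNReal.ofReal_pow (by linarith), pot, ← ENNReal.ofReal_mul (by positivity)]
  apply ENNReal.ofReal_le_ofReal
  have hgrowth : (1 + ε) ^ T ≤ √n := calc
    (1 + ε) ^ T ≤ Real.exp ε ^ T := by gcongr; linarith [Real.add_one_le_exp ε]
    _ = Real.exp (ε * T) := by rw [← Real.exp_nat_mul, mul_comm]
    _ ≤ Real.exp (Real.log n / 2) := by
        gcongr
        linarith [Real.log_nonneg (by exact_mod_cast hn : (1 : ℝ) ≤ n)]
    _ = √n := by rw [Real.sqrt_eq_rpow, Real.rpow_def_of_pos hn', mul_one_div]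
  have hcube : n * √n ≤ ((Y : ℝ) + 1) ^ 3 := calc
    n * √n = √n ^ 3 := by rw [pow_succ, Real.sq_sqrt hn'.le]
    _ ≤ ((Y : ℝ) + 1) ^ 3 := by gcongr; linarith
  calc (1 + ε) ^ T * (1 / ((Y : ℝ) + 1) ^ 3) ≤ √n * (1 / (n * √n)) := by
        gcongr
    _ = 1 / n := by field_simp

-- `2064 = 4 · 516`, so that the potential grows at most by the factor `n ^ (1 / 4)`.
lemma mul_floor_le_log_div_four {α : ℝ} (hα : 0 < α) (hn : 1 ≤ n) :
    516 / (α * n ^ 2) * ⌊α / 2064 * (n : ℝ) ^ 2 * Real.log n⌋₊ ≤ Real.log n / 4 := by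
  calc 516 / (α * n ^ 2) * ⌊α / 2064 * (n : ℝ) ^ 2 * Real.log n⌋₊
      ≤ 516 / (α * n ^ 2) * (α / 2064 * n ^ 2 * Real.log n) := by
        gcongr
        exact Nat.floor_le (by positivity)
    _ = Real.log n / 4 := by field_simp; ring

lemma prob_exists_covers_le_expect (hn : Even n) (P : Finset (Individual n)) (t : ℕ) :
    prob (run (semoStep cocz mutOp) P t) {l | ∀ Q ∈ l, ¬ covers cocz Q}ᶜ
      ≤ expect (run (semoStep cocz mutOp) P t) (fun l => pot (minDefect l.headI)) := by
  refine prob_le_expect fun l hl hcov => ?_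
  obtain ⟨Q, hQ, hQcov⟩ : ∃ Q ∈ l, covers cocz Q := by simpa using hcov
  have := run_support_head_le_of_mem (V := minDefect)
    (fun _ _ hb => minDefect_le_of_mem_support_semoStep hn hb) t l hl Q hQ
  rw [minDefect_eq_zero_of_covers hn hQcov, Nat.le_zero] at this
  rw [this, pot_zero]

end Conclusion

/-- For every constant `α > 0` there exist `c, C > 0` such that for all
sufficiently large even `n`, the SEMO and GSEMO maximizing COCZ, started from any population
state consisting entirely of Pareto-optimal individuals, of size at least `α·n`, and with
distance at least `√n` to the Pareto borders, do not cover the Pareto front within the first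
`⌊c n² ln n⌋` iterations (hence perform at least `c n² ln n` evaluations before covering it),
with probability at least `1 − C/n`. -/
theorem semo_gsemo_cocz_idealized_lower_bound (α : ℝ) (hα : 0 < α) :
    ∃ c C : ℝ, 0 < c ∧ 0 < C ∧ ∃ N₀ : ℕ, ∀ n : ℕ, N₀ ≤ n → Even n →
      ∀ mutOp : Individual n → PMF (Individual n),
        (mutOp = oneBitMut ∨ mutOp = stdBitMut) →
        ∀ P : Finset (Individual n), validPop cocz P →
          (∀ x ∈ P, g1 x = n / 2) →
          α * n ≤ (P.card : ℝ) →
          (∀ z ∈ P, Real.sqrt n ≤ min ((g2 z : ℝ)) ((n : ℝ) / 2 - (g2 z : ℝ))) →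
          1 - ENNReal.ofReal (C / n) ≤
            prob (run (semoStep cocz mutOp) P ⌊c * (n : ℝ) ^ 2 * Real.log n⌋₊)
              {l | ∀ Q ∈ l, ¬ covers cocz Q} := by
  refine ⟨α / 2064, 1, by positivity, one_pos, 1,
    fun n hn heven mutOp hmut P hval hg1 hsize hdist => ?_⟩
  have hne : P.Nonempty :=
    Finset.card_pos.mp (by exact_mod_cast (by positivity : 0 < α * n).trans_le hsize)
  obtain ⟨z, hz, hzmin⟩ := exists_defect_eq_minDefect hne
  obtain ⟨hsqrt, hhalf⟩ : √n ≤ minDefect P ∧ √n ≤ n / 2 - minDefect P := by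
    rw [← le_min_iff, ← hzmin, defect_eq_g2 (hg1 z hz)]
    exact hdist z hz
  have hP : PopInvariant P P :=
    ⟨hval, subset_rfl, by exact_mod_cast (by linarith [Real.sqrt_nonneg n] : 2 * (minDefect P : ℝ) ≤ n)⟩
  refine one_sub_le_prob ((prob_exists_covers_le_expect heven P _).trans ?_)
  calc _ ≤ (1 + ENNReal.ofReal (516 / (α * n ^ 2))) ^ _ * pot (minDefect P) :=
        expect_run_le hP (fun _ hQ _ hQ' => hQ.semoStep heven hne hg1 hQ')
          (fun _ hQ => expect_semoStep_pot_le_of_invariant heven hmut hα hval hsize (by omega) hQ) _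
    _ ≤ ENNReal.ofReal (1 / n) :=
        one_add_pow_mul_pot_le hn (by positivity) (mul_floor_le_log_div_four hα hn) hsqrt

end GSEMOPaper
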